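/- arXiv:1504.07907 — 2 statements merged into one kernel-verified Lean document; each statement's English description precedes it below -/
import Mathlib

section
/- Let F be a symmetric fourth-order tensor on ℝⁿ with score function S⁴(x) = Σ_{i,j,k,l=1}^n F_{ijkl} x_i x_j x_k x_l, and let ‖F‖₂ = sqrt(Σ_{i,j,k,l=1}^n (F_{ijkl})²). Then for any α ≥ 3‖F‖₂, the function S⁴_α(x) := S⁴(x) + α‖x‖₂⁴ is convex on ℝⁿ. -/
/-! Along a line `x + s • v`, `S⁴_α` is a quartic polynomial in `s` whose quadratic coefficient
is the sum of the six mixed terms `F(v, v, x, x), F(v, x, v, x), …` plus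
`α (2 ‖x‖² ‖v‖² + 4 ⟪x, v⟫²)`. By Cauchy–Schwarz each mixed term is at least
`-‖F‖₂ ‖x‖² ‖v‖²`, so the coefficient is at least `(2α - 6‖F‖₂) ‖x‖² ‖v‖² ≥ 0`. A function
that is a polynomial with nonnegative quadratic coefficient on every line, about every base
point, has nonnegative second derivative along every line, hence is convex. -/

/-- A fourth-order tensor is symmetric if its entries are invariant under any
permutation of the indices. -/
def Sym4 {n : ℕ} (F : Fin n → Fin n → Fin n → Fin n → ℝ) : Prop :=
  ∀ (σ : Equiv.Perm (Fin 4)) (v : Fin 4 → Fin n),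
    F (v (σ 0)) (v (σ 1)) (v (σ 2)) (v (σ 3)) = F (v 0) (v 1) (v 2) (v 3)

/-- The multilinear form associated to a fourth-order tensor. -/
def mform4 {n : ℕ} (F : Fin n → Fin n → Fin n → Fin n → ℝ)
    (x y z t : EuclideanSpace ℝ (Fin n)) : ℝ :=
  ∑ i, ∑ j, ∑ k, ∑ l, F i j k l * x i * y j * z k * t l

/-- The Frobenius norm `‖F‖₂` of a fourth-order tensor. -/
noncomputable def frobNorm4 {n : ℕ} (F : Fin n → Fin n → Fin n → Fin n → ℝ) : ℝ :=
  Real.sqrt (∑ i, ∑ j, ∑ k, ∑ l, (F i j k l) ^ 2)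

open Set Finset Polynomial
open scoped RealInnerProductSpace

section LineCriterion

variable {E : Type*} [AddCommGroup E] [Module ℝ E] {f : E → ℝ}

theorem convexOn_univ_of_forall_convexOn_line
    (hf : ∀ x v : E, ConvexOn ℝ univ fun t : ℝ => f (x + t • v)) :
    ConvexOn ℝ univ f := by
  refine ⟨convex_univ, fun x _ y _ a b ha hb hab => ?_⟩
  have hxy : a • x + b • y = x + b • (y - x) := by
    rw [smul_sub, eq_sub_of_add_eq hab, sub_smul, one_smul]; abel
  simpa [hxy] using (hf x (y - x)).2 (mem_univ 0) (mem_univ 1) ha hb hab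

theorem Polynomial.eval_iterate_derivative_two (p : ℝ[X]) (t : ℝ) :
    (derivative^[2] p).eval t = 2 * (taylor t p).coeff 2 := by
  rw [taylor_coeff, ← factorial_smul_hasseDeriv]
  simp [Nat.factorial]

/- The polynomial of `f` on the line through `x + t • v` is the Taylor shift by `t` of the one
through `x`, so the second derivative of `t ↦ f (x + t • v)` at `t` is twice its quadratic
coefficient. -/
theorem convexOn_univ_of_forall_polynomial_line
    (hf : ∀ x v : E, ∃ p : ℝ[X], 0 ≤ p.coeff 2 ∧ ∀ s, f (x + s • v) = p.eval s) :
    ConvexOn ℝ univ f := by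
  refine convexOn_univ_of_forall_convexOn_line fun x v => ?_
  obtain ⟨p, -, hp⟩ := hf x v
  simp only [hp]
  have hderiv (q : ℝ[X]) : deriv (fun t => q.eval t) = fun t => q.derivative.eval t :=
    funext fun _ => q.deriv
  refine convexOn_univ_of_deriv2_nonneg p.differentiable
    (by rw [hderiv]; exact p.derivative.differentiable) fun t => ?_
  obtain ⟨q, hq2, hq⟩ := hf (x + t • v) v
  have hq_taylor : q = taylor t p := Polynomial.funext fun s => by
    rw [taylor_eval, ← hq, ← hp, add_assoc, ← add_smul, add_comm t]
  have h2 := p.eval_iterate_derivative_two t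
  simp only [Function.iterate_succ, Function.iterate_zero, Function.comp_apply, id_eq,
    hderiv] at h2 ⊢
  rw [h2, ← hq_taylor]
  positivity

theorem convexOn_univ_of_forall_quartic_line
    (hf : ∀ x v : E, ∃ a b c d e : ℝ, 0 ≤ c ∧
      ∀ s, f (x + s • v) = a + b * s + c * s ^ 2 + d * s ^ 3 + e * s ^ 4) :
    ConvexOn ℝ univ f := by
  refine convexOn_univ_of_forall_polynomial_line fun x v => ?_
  obtain ⟨a, b, c, d, e, hc, hline⟩ := hf x v
  refine ⟨C a + C b * X + C c * X ^ 2 + C d * X ^ 3 + C e * X ^ 4, by simpa using hc,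
    fun s => ?_⟩
  simp [hline]

end LineCriterion

theorem norm_add_smul_pow_four {E : Type*} [NormedAddCommGroup E] [InnerProductSpace ℝ E]
    (x v : E) (s : ℝ) :
    ‖x + s • v‖ ^ 4 = (‖x‖ ^ 2 + 2 * s * ⟪x, v⟫ + s ^ 2 * ‖v‖ ^ 2) ^ 2 := by
  rw [show 4 = 2 * 2 by rfl, pow_mul, norm_add_sq_real, norm_smul, inner_smul_right,
    Real.norm_eq_abs, mul_pow, sq_abs]
  ring

section Tensor

variable {n : ℕ} (F : Fin n → Fin n → Fin n → Fin n → ℝ)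

def mform4Mixed (x v : EuclideanSpace ℝ (Fin n)) : ℝ :=
  mform4 F v v x x + mform4 F v x v x + mform4 F v x x v
    + mform4 F x v v x + mform4 F x v x v + mform4 F x x v v

theorem mform4_add_smul_self (x v : EuclideanSpace ℝ (Fin n)) (s : ℝ) :
    mform4 F (x + s • v) (x + s • v) (x + s • v) (x + s • v) = mform4 F x x x x
      + (mform4 F v x x x + mform4 F x v x x + mform4 F x x v x + mform4 F x x x v) * s
      + mform4Mixed F x v * s ^ 2
      + (mform4 F x v v v + mform4 F v x v v + mform4 F v v x v + mform4 F v v v x) * s ^ 3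
      + mform4 F v v v v * s ^ 4 := by
  simp only [mform4Mixed, mform4, PiLp.add_apply, PiLp.smul_apply, smul_eq_mul, sum_mul,
    ← sum_add_distrib]
  refine sum_congr rfl fun i _ => sum_congr rfl fun j _ => sum_congr rfl fun k _ =>
    sum_congr rfl fun l _ => by ring

theorem abs_mform4_le (a b c d : EuclideanSpace ℝ (Fin n)) :
    |mform4 F a b c d| ≤ frobNorm4 F * (‖a‖ * ‖b‖ * ‖c‖ * ‖d‖) := by
  have hm : mform4 F a b c d = ∑ p : Fin n × Fin n × Fin n × Fin n,
      F p.1 p.2.1 p.2.2.1 p.2.2.2 * (a p.1 * b p.2.1 * c p.2.2.1 * d p.2.2.2) := by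
    simp only [mform4, Fintype.sum_prod_type, mul_assoc]
  have hF : ∑ i, ∑ j, ∑ k, ∑ l, F i j k l ^ 2
      = ∑ p : Fin n × Fin n × Fin n × Fin n, F p.1 p.2.1 p.2.2.1 p.2.2.2 ^ 2 := by
    simp only [Fintype.sum_prod_type]
  have hnorm : ∑ p : Fin n × Fin n × Fin n × Fin n, (a p.1 * b p.2.1 * c p.2.2.1 * d p.2.2.2) ^ 2
      = (‖a‖ * ‖b‖ * ‖c‖ * ‖d‖) ^ 2 := by
    simp only [Fintype.sum_prod_type, mul_pow, ← sum_mul, ← mul_sum,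
      EuclideanSpace.real_norm_sq_eq]
  rw [hm, frobNorm4, hF, ← Real.sqrt_sq (by positivity : 0 ≤ ‖a‖ * ‖b‖ * ‖c‖ * ‖d‖), ← hnorm,
    ← Real.sqrt_mul (sum_nonneg fun _ _ => sq_nonneg _)]
  exact Real.abs_le_sqrt (sum_mul_sq_le_sq_mul_sq _ _ _)

theorem neg_six_mul_le_mform4Mixed (x v : EuclideanSpace ℝ (Fin n)) :
    -(6 * frobNorm4 F * (‖x‖ ^ 2 * ‖v‖ ^ 2)) ≤ mform4Mixed F x v := by
  have h (a b c d) := neg_le_of_abs_le (abs_mform4_le F a b c d)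
  rw [mform4Mixed]
  linarith [h v v x x, h v x v x, h v x x v, h x v v x, h x v x v, h x x v v]

end Tensor

theorem stmt_10_general {n : ℕ} (F : Fin n → Fin n → Fin n → Fin n → ℝ)
    (α : ℝ) (hα : 3 * frobNorm4 F ≤ α) :
    ConvexOn ℝ Set.univ
      (fun x : EuclideanSpace ℝ (Fin n) => mform4 F x x x x + α * ‖x‖ ^ 4) := by
  have hα₀ : 0 ≤ α := (mul_nonneg zero_le_three (Real.sqrt_nonneg _)).trans hα
  refine convexOn_univ_of_forall_quartic_line fun x v => ⟨mform4 F x x x x + α * ‖x‖ ^ 4,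
    mform4 F v x x x + mform4 F x v x x + mform4 F x x v x + mform4 F x x x v
      + 4 * α * ‖x‖ ^ 2 * ⟪x, v⟫,
    mform4Mixed F x v + α * (2 * ‖x‖ ^ 2 * ‖v‖ ^ 2 + 4 * ⟪x, v⟫ ^ 2),
    mform4 F x v v v + mform4 F v x v v + mform4 F v v x v + mform4 F v v v x
      + 4 * α * ‖v‖ ^ 2 * ⟪x, v⟫,
    mform4 F v v v v + α * ‖v‖ ^ 4, ?_, fun s => ?_⟩
  · linarith [neg_six_mul_le_mform4Mixed F x v, mul_nonneg hα₀ (sq_nonneg ⟪x, v⟫),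
      mul_le_mul_of_nonneg_right hα (by positivity : 0 ≤ ‖x‖ ^ 2 * ‖v‖ ^ 2)]
  · rw [mform4_add_smul_self, norm_add_smul_pow_four]
    ring

/-- For `α ≥ 3‖F‖₂`, the function `S⁴_α(x) = S⁴(x) + α ‖x‖₂⁴` is convex on `ℝⁿ`. -/
theorem stmt_10 {n : ℕ} (F : Fin n → Fin n → Fin n → Fin n → ℝ) (hF : Sym4 F)
    (α : ℝ) (hα : 3 * frobNorm4 F ≤ α) :
    ConvexOn ℝ Set.univ
      (fun x : EuclideanSpace ℝ (Fin n) => mform4 F x x x x + α * ‖x‖ ^ 4) :=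
  stmt_10_general F α hα
end

section
/- Let F be a symmetric fourth-order tensor on ℝⁿ with multilinear form F⁴, let α ∈ ℝ, and define S⁴_α(x) = F⁴(x,x,x,x) + α‖x‖₂⁴. Then S⁴_α is convex on ℝⁿ if and only if 12 F⁴(x,x,y,y) + 8α⟨x,y⟩² + 4α‖x‖₂²‖y‖₂² ≥ 0 for all x,y ∈ ℝⁿ. -/
/-!
Convexity on a vector space is convexity along every line. Along `t ↦ x + t • d` the function
`S⁴_α` is a quartic polynomial in `t` (the symmetry of `F` collects the sixteen terms of the
multilinear expansion), whose second derivative at `t` is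
`12 F⁴(y,y,d,d) + 8α⟨y,d⟩² + 4α‖y‖²‖d‖²` with `y = x + t • d`. A polynomial is convex exactly when
its second derivative is nonnegative, and `y` ranges over all of `ℝⁿ`.
-/

open Set Finset

theorem convexOn_univ_iff_of_hasDerivAt {f f' f'' : ℝ → ℝ}
    (hf : ∀ t, HasDerivAt f (f' t) t) (hf' : ∀ t, HasDerivAt f' (f'' t) t) :
    ConvexOn ℝ univ f ↔ ∀ t, 0 ≤ f'' t := by
  refine ⟨fun hc t => ?_, fun h => ?_⟩
  · have hmono : Monotone f' := by
      simpa [funext fun s => (hf s).deriv, monotoneOn_univ] using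
        hc.monotoneOn_deriv fun s _ => (hf s).differentiableAt
    exact (hf' t).nonneg_of_monotone hmono
  · exact convexOn_of_hasDerivWithinAt2_nonneg convex_univ
      (fun t _ => (hf t).continuousAt.continuousWithinAt) (fun t _ => (hf t).hasDerivWithinAt)
      (fun t _ => (hf' t).hasDerivWithinAt) fun t _ => h t

theorem convexOn_univ_quartic_iff (A B C D E : ℝ) :
    ConvexOn ℝ univ (fun t : ℝ => A + B * t + C * t ^ 2 + D * t ^ 3 + E * t ^ 4) ↔
      ∀ t, 0 ≤ 2 * C + 6 * D * t + 12 * E * t ^ 2 := by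
  refine convexOn_univ_iff_of_hasDerivAt
    (f' := fun t => B + 2 * C * t + 3 * D * t ^ 2 + 4 * E * t ^ 3) (fun t => ?_) (fun t => ?_)
  · refine ((((((hasDerivAt_id t).const_mul B).const_add A).add
      ((hasDerivAt_pow 2 t).const_mul C)).add ((hasDerivAt_pow 3 t).const_mul D)).add
      ((hasDerivAt_pow 4 t).const_mul E)).congr_deriv ?_
    simp only [mul_one, Nat.cast_ofNat, Nat.add_one_sub_one, pow_one]
    ring
  · refine (((((hasDerivAt_id t).const_mul (2 * C)).const_add B).add
      ((hasDerivAt_pow 2 t).const_mul (3 * D))).add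
      ((hasDerivAt_pow 3 t).const_mul (4 * E))).congr_deriv ?_
    simp only [mul_one, Nat.cast_ofNat, Nat.add_one_sub_one, pow_one]
    ring

theorem convexOn_univ_iff_forall_convexOn_line {E : Type*} [AddCommGroup E] [Module ℝ E]
    {f : E → ℝ} : ConvexOn ℝ univ f ↔ ∀ x d : E, ConvexOn ℝ univ fun t : ℝ => f (x + t • d) := by
  refine ⟨fun hf x d => ?_, fun h => ⟨convex_univ, fun x _ y _ a b ha hb hab => ?_⟩⟩
  · have hline := hf.comp_affineMap (AffineMap.lineMap x (x + d))
    rw [preimage_univ] at hline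
    refine hline.congr fun t _ => ?_
    simp [AffineMap.lineMap_apply, add_comm]
  · have hseg := (h x (y - x)).2 (mem_univ 0) (mem_univ 1) ha hb hab
    obtain rfl : b = 1 - a := by linarith
    simp only [smul_eq_mul, mul_zero, mul_one, zero_add, zero_smul, add_zero, one_smul,
      add_sub_cancel] at hseg ⊢
    convert hseg using 2
    module

variable {n : ℕ} {F : Fin n → Fin n → Fin n → Fin n → ℝ}

namespace Sym4

theorem apply_swap_01 (hF : Sym4 F) (i j k l : Fin n) : F j i k l = F i j k l := by
  simpa [Equiv.swap_apply_of_ne_of_ne] using hF (Equiv.swap 0 1) ![i, j, k, l]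

theorem apply_swap_12 (hF : Sym4 F) (i j k l : Fin n) : F i k j l = F i j k l := by
  simpa [Equiv.swap_apply_of_ne_of_ne] using hF (Equiv.swap 1 2) ![i, j, k, l]

theorem apply_swap_23 (hF : Sym4 F) (i j k l : Fin n) : F i j l k = F i j k l := by
  simpa [Equiv.swap_apply_of_ne_of_ne] using hF (Equiv.swap 2 3) ![i, j, k, l]

end Sym4

theorem mform4_swap_01 (hF : Sym4 F) (x y z w : EuclideanSpace ℝ (Fin n)) :
    mform4 F y x z w = mform4 F x y z w := by
  rw [mform4, sum_comm]
  simp only [mform4, hF.apply_swap_01]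
  exact sum_congr rfl fun i _ => sum_congr rfl fun j _ => sum_congr rfl fun k _ =>
    sum_congr rfl fun l _ => by ring

theorem mform4_swap_12 (hF : Sym4 F) (x y z w : EuclideanSpace ℝ (Fin n)) :
    mform4 F x z y w = mform4 F x y z w := by
  simp only [mform4]
  refine sum_congr rfl fun i _ => ?_
  rw [sum_comm]
  simp only [hF.apply_swap_12]
  exact sum_congr rfl fun j _ => sum_congr rfl fun k _ => sum_congr rfl fun l _ => by ring

theorem mform4_swap_23 (hF : Sym4 F) (x y z w : EuclideanSpace ℝ (Fin n)) :
    mform4 F x y w z = mform4 F x y z w := by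
  simp only [mform4]
  refine sum_congr rfl fun i _ => sum_congr rfl fun j _ => ?_
  rw [sum_comm]
  simp only [hF.apply_swap_23]
  exact sum_congr rfl fun k _ => sum_congr rfl fun l _ => by ring

section Linearity

variable (x y z w d : EuclideanSpace ℝ (Fin n)) (t : ℝ)

theorem mform4_add_smul_0 :
    mform4 F (x + t • d) y z w = mform4 F x y z w + t * mform4 F d y z w := by
  simp [mform4, mul_add, add_mul, sum_add_distrib, mul_sum, mul_assoc, mul_left_comm]

theorem mform4_add_smul_1 :
    mform4 F y (x + t • d) z w = mform4 F y x z w + t * mform4 F y d z w := by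
  simp [mform4, mul_add, add_mul, sum_add_distrib, mul_sum, mul_assoc, mul_left_comm]

theorem mform4_add_smul_2 :
    mform4 F y z (x + t • d) w = mform4 F y z x w + t * mform4 F y z d w := by
  simp [mform4, mul_add, add_mul, sum_add_distrib, mul_sum, mul_assoc, mul_left_comm]

theorem mform4_add_smul_3 :
    mform4 F y z w (x + t • d) = mform4 F y z w x + t * mform4 F y z w d := by
  simp [mform4, mul_add, sum_add_distrib, mul_sum, mul_assoc, mul_left_comm]

end Linearity

theorem mform4_add_smul_diag (hF : Sym4 F) (x d : EuclideanSpace ℝ (Fin n)) (t : ℝ) :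
    mform4 F (x + t • d) (x + t • d) (x + t • d) (x + t • d) =
      mform4 F x x x x + 4 * t * mform4 F x x x d + 6 * t ^ 2 * mform4 F x x d d +
        4 * t ^ 3 * mform4 F x d d d + t ^ 4 * mform4 F d d d d := by
  simp only [mform4_add_smul_0, mform4_add_smul_1, mform4_add_smul_2, mform4_add_smul_3]
  have h₁ : mform4 F x x d x = mform4 F x x x d := mform4_swap_23 hF x x x d
  have h₂ : mform4 F x d x x = mform4 F x x x d := (mform4_swap_12 hF x x d x).trans h₁
  have h₃ : mform4 F d x x x = mform4 F x x x d := (mform4_swap_01 hF x d x x).trans h₂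
  have g₁ : mform4 F x d x d = mform4 F x x d d := mform4_swap_12 hF x x d d
  have g₂ : mform4 F d x x d = mform4 F x x d d := (mform4_swap_01 hF x d x d).trans g₁
  have g₃ : mform4 F x d d x = mform4 F x x d d := (mform4_swap_23 hF x d x d).trans g₁
  have g₄ : mform4 F d x d x = mform4 F x x d d := (mform4_swap_01 hF x d d x).trans g₃
  have g₅ : mform4 F d d x x = mform4 F x x d d := (mform4_swap_12 hF d x d x).trans g₄
  have k₁ : mform4 F d x d d = mform4 F x d d d := mform4_swap_01 hF x d d d
  have k₂ : mform4 F d d x d = mform4 F x d d d := (mform4_swap_12 hF d x d d).trans k₁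
  have k₃ : mform4 F d d d x = mform4 F x d d d := (mform4_swap_23 hF d d x d).trans k₂
  rw [h₁, h₂, h₃, g₁, g₂, g₃, g₄, g₅, k₁, k₂, k₃]
  ring

theorem mform4_add_smul_add_smul_left (hF : Sym4 F) (x d : EuclideanSpace ℝ (Fin n)) (t : ℝ) :
    mform4 F (x + t • d) (x + t • d) d d =
      mform4 F x x d d + 2 * t * mform4 F x d d d + t ^ 2 * mform4 F d d d d := by
  rw [mform4_add_smul_0, mform4_add_smul_1, mform4_add_smul_1, mform4_swap_01 hF x d d d]
  ring

theorem norm_add_smul_sq {E : Type*} [NormedAddCommGroup E] [InnerProductSpace ℝ E]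
    (x d : E) (t : ℝ) :
    ‖x + t • d‖ ^ 2 = ‖x‖ ^ 2 + 2 * t * inner ℝ x d + t ^ 2 * ‖d‖ ^ 2 := by
  rw [norm_add_sq_real, real_inner_smul_right, norm_smul, mul_pow, Real.norm_eq_abs, sq_abs]
  ring

noncomputable def quarticForm (F : Fin n → Fin n → Fin n → Fin n → ℝ) (α : ℝ)
    (x : EuclideanSpace ℝ (Fin n)) : ℝ :=
  mform4 F x x x x + α * ‖x‖ ^ 4

noncomputable def quarticHessian (F : Fin n → Fin n → Fin n → Fin n → ℝ) (α : ℝ)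
    (x y : EuclideanSpace ℝ (Fin n)) : ℝ :=
  12 * mform4 F x x y y + 8 * α * inner ℝ x y ^ 2 + 4 * α * ‖x‖ ^ 2 * ‖y‖ ^ 2

theorem quarticForm_add_smul (hF : Sym4 F) (α : ℝ) (x d : EuclideanSpace ℝ (Fin n)) (t : ℝ) :
    quarticForm F α (x + t • d) =
      quarticForm F α x + (4 * mform4 F x x x d + 4 * α * ‖x‖ ^ 2 * inner ℝ x d) * t +
        quarticHessian F α x d / 2 * t ^ 2 +
        (4 * mform4 F x d d d + 4 * α * inner ℝ x d * ‖d‖ ^ 2) * t ^ 3 +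
        quarticForm F α d * t ^ 4 := by
  have hnorm : ‖x + t • d‖ ^ 4 = (‖x‖ ^ 2 + 2 * t * inner ℝ x d + t ^ 2 * ‖d‖ ^ 2) ^ 2 := by
    rw [← norm_add_smul_sq]; ring
  simp only [quarticForm, quarticHessian, mform4_add_smul_diag hF, hnorm]
  ring

theorem quarticHessian_add_smul_left (hF : Sym4 F) (α : ℝ) (x d : EuclideanSpace ℝ (Fin n))
    (t : ℝ) :
    quarticHessian F α (x + t • d) d =
      quarticHessian F α x d + 6 * (4 * mform4 F x d d d + 4 * α * inner ℝ x d * ‖d‖ ^ 2) * t +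
        12 * quarticForm F α d * t ^ 2 := by
  have hinner : inner ℝ (x + t • d) d = inner ℝ x d + t * ‖d‖ ^ 2 := by
    rw [inner_add_left, real_inner_smul_left, real_inner_self_eq_norm_sq]
  simp only [quarticHessian, quarticForm, mform4_add_smul_add_smul_left hF, hinner,
    norm_add_smul_sq]
  ring

theorem convexOn_quarticForm_line_iff (hF : Sym4 F) (α : ℝ) (x d : EuclideanSpace ℝ (Fin n)) :
    ConvexOn ℝ univ (fun t : ℝ => quarticForm F α (x + t • d)) ↔
      ∀ t : ℝ, 0 ≤ quarticHessian F α (x + t • d) d := by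
  simp only [quarticForm_add_smul hF, quarticHessian_add_smul_left hF,
    convexOn_univ_quartic_iff]
  refine forall_congr' fun t => ?_
  ring_nf

/-- `S⁴_α(x) = F⁴(x,x,x,x) + α‖x‖₂⁴` is convex if and only if
`12 F⁴(x,x,y,y) + 8α⟨x,y⟩² + 4α‖x‖₂²‖y‖₂² ≥ 0` for all `x, y`. -/
theorem stmt_11 {n : ℕ} (F : Fin n → Fin n → Fin n → Fin n → ℝ) (hF : Sym4 F)
    (α : ℝ) :
    ConvexOn ℝ Set.univ
        (fun x : EuclideanSpace ℝ (Fin n) => mform4 F x x x x + α * ‖x‖ ^ 4) ↔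
      ∀ x y : EuclideanSpace ℝ (Fin n),
        0 ≤ 12 * mform4 F x x y y + 8 * α * (inner ℝ x y : ℝ) ^ 2 +
            4 * α * ‖x‖ ^ 2 * ‖y‖ ^ 2 := by
  change ConvexOn ℝ univ (quarticForm F α) ↔ ∀ x y, 0 ≤ quarticHessian F α x y
  simp only [convexOn_univ_iff_forall_convexOn_line, convexOn_quarticForm_line_iff hF]
  exact ⟨fun h x y => by simpa using h x y 0, fun h x d t => h (x + t • d) d⟩
end
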